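/- arXiv:1403.7665 — 4 statements merged into one kernel-verified Lean document; each statement's English description precedes it below -/
import Mathlib

section
/- For every real number t, ∑_{x=1}^∞ e^{tx} · x/(x+1)! = e^{−t}(1 − e^{e^t} + e^{t + e^t}). That is, the moment generating function of the telescoping Poisson distribution is M(t) = e^{−t}(1 − e^{e^t} + e^{t+e^t}). -/
/-!
With `u = e^t`, the mass splits as `x/(x+1)! = 1/x! - 1/(x+1)!`, so the series is
`∑ u^x/x! - ∑ u^x/(x+1)! = e^u - (e^u - 1)/u`. Both sums may be taken over all of `ℕ`,
since the `x = 0` term of the original series vanishes.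
-/

open Nat Real

theorem natCast_div_factorial_succ {K : Type*} [Field K] [CharZero K] (n : ℕ) :
    (n : K) / (n + 1)! = 1 / (n)! - 1 / (n + 1)! := by
  rw [factorial_succ, cast_mul]
  field_simp
  push_cast
  ring

theorem Real.hasSum_pow_div_factorial (x : ℝ) : HasSum (fun n : ℕ => x ^ n / n !) (exp x) := by
  rw [exp_eq_exp_ℝ]
  exact NormedSpace.expSeries_div_hasSum_exp x

theorem Real.hasSum_pow_div_factorial_succ {x : ℝ} (hx : x ≠ 0) :
    HasSum (fun n : ℕ => x ^ n / (n + 1)!) ((exp x - 1) / x) := by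
  have h := (hasSum_nat_add_iff' 1).mpr (hasSum_pow_div_factorial x)
  simp only [Finset.sum_range_one, pow_zero, factorial_zero, cast_one, div_one] at h
  refine (h.div_const x).congr_fun fun n => ?_
  rw [pow_succ, mul_div_right_comm, mul_div_cancel_right₀ _ hx]

/-- For every real `t`, the moment generating function of the telescoping
Poisson distribution satisfies
`∑_{x=1}^∞ e^{tx} · x/(x+1)! = e^{-t} (1 - e^{e^t} + e^{t + e^t})`. -/
theorem stmt_5 (t : ℝ) :
    HasSum (fun x : ℕ+ => Real.exp (t * (x : ℕ)) * (((x : ℕ) : ℝ) / Nat.factorial ((x : ℕ) + 1)))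
      (Real.exp (-t) * (1 - Real.exp (Real.exp t) + Real.exp (t + Real.exp t))) := by
  rw [hasSum_pnat_iff (f := fun n : ℕ => exp (t * n) * ((n : ℝ) / (n + 1)!)), cast_zero, zero_div,
    mul_zero, add_zero]
  convert (hasSum_pow_div_factorial (exp t)).sub (hasSum_pow_div_factorial_succ (exp_ne_zero t))
    using 1
  · ext n
    rw [natCast_div_factorial_succ, ← exp_nat_mul, mul_comm t]
    ring
  · rw [exp_neg, exp_add]
    field_simp
    ring
end

section
/- Let 0 < θ < 1 and let X be a random variable on the nonnegative integers with P(X = x) = θ^x/x! − θ^{x+1}/(x+1)!. Then for every real t ≠ 0, E(e^{tX}) = ∑_{x=0}^∞ e^{tx}(θ^x/x! − θ^{x+1}/(x+1)!) = e^{θe^t}(1 − e^{−t}) + e^{−t}. -/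
/-!
With `u = θ eᵗ`, the `n`-th term of the series is `uⁿ/n! - e⁻ᵗ uⁿ⁺¹/(n+1)!`: the exponential
series of `u` minus `e⁻ᵗ` times its tail from index one, so the sum is `eᵘ - e⁻ᵗ (eᵘ - 1)`.
-/

open Nat Real

theorem HasSum.sub_mul_shift {R : Type*} [Ring R] [TopologicalSpace R] [IsTopologicalRing R]
    {f : ℕ → R} {a : R} (hf : HasSum f a) (c : R) :
    HasSum (fun n => f n - c * f (n + 1)) (a - c * (a - f 0)) := by
  have hshift : HasSum (fun n => f (n + 1)) (a - f 0) := by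
    simpa using (hasSum_nat_add_iff' 1).mpr hf
  exact hf.sub (hshift.mul_left c)

theorem exp_mul_telescoping_poisson_term (θ t : ℝ) (n : ℕ) :
    exp (t * n) * (θ ^ n / (n !) - θ ^ (n + 1) / (n + 1)!) =
      (θ * exp t) ^ n / (n !) - exp (-t) * ((θ * exp t) ^ (n + 1) / (n + 1)!) := by
  have hpow : exp (t * n) = exp t ^ n := by rw [← exp_nat_mul, mul_comm]
  rw [hpow, exp_neg]
  field_simp
  ring

theorem stmt_7_general (θ : ℝ) (t : ℝ) :
    HasSum (fun x : ℕ =>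
        Real.exp (t * x) * (θ ^ x / Nat.factorial x - θ ^ (x + 1) / Nat.factorial (x + 1)))
      (Real.exp (θ * Real.exp t) * (1 - Real.exp (-t)) + Real.exp (-t)) := by
  have hexp : HasSum (fun n : ℕ => (θ * exp t) ^ n / n !) (exp (θ * exp t)) := by
    rw [exp_eq_exp_ℝ]
    exact NormedSpace.expSeries_div_hasSum_exp _
  have hsum := hexp.sub_mul_shift (exp (-t))
  rw [pow_zero, Nat.factorial_zero, Nat.cast_one, div_one] at hsum
  rw [funext (exp_mul_telescoping_poisson_term θ t), show exp (θ * exp t) * (1 - exp (-t)) + exp (-t) =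
    exp (θ * exp t) - exp (-t) * (exp (θ * exp t) - 1) by ring]
  exact hsum

/-- For `0 < θ < 1` and a random variable `X` on the nonnegative integers with
`P(X = x) = θ^x/x! - θ^{x+1}/(x+1)!`, for every real `t ≠ 0`,
`E(e^{tX}) = ∑_{x=0}^∞ e^{tx} (θ^x/x! - θ^{x+1}/(x+1)!) = e^{θe^t}(1 - e^{-t}) + e^{-t}`. -/
theorem stmt_7 (θ : ℝ) (hθ0 : 0 < θ) (hθ1 : θ < 1) (t : ℝ) (ht : t ≠ 0) :
    HasSum (fun x : ℕ =>
        Real.exp (t * x) * (θ ^ x / Nat.factorial x - θ ^ (x + 1) / Nat.factorial (x + 1)))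
      (Real.exp (θ * Real.exp t) * (1 - Real.exp (-t)) + Real.exp (-t)) :=
  stmt_7_general θ t
end

section
/- For every positive integer n, ∑_{k=1}^{n} C_{n,k} = C_n, where C_{n,k} = (k/(2n−k))·C(2n−k, n) is the k-fold Catalan convolution and C_n = (1/(n+1))·C(2n, n) is the n-th Catalan number. -/
/-!
Writing `m = 2n - k`, the ballot identity `(k/m)·C(m, n) = C(m-1, n-1) - C(m-1, n)` together with
Pascal's rule turns the `k`-th term into `G k - G (k+1)` with `G k = C(2n-k, n) - C(2n-k, n+1)`.
The sum telescopes to `G 1 - G (n+1) = G 1`, and the same identity at `k = 0` gives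
`G 1 = G 0 = C(2n, n) - C(2n, n+1) = C(2n, n)/(n+1)`.
-/

open Finset

noncomputable def chooseDiff (m k : ℕ) : ℝ := m.choose k - m.choose (k + 1)

lemma chooseDiff_eq_zero_of_lt {m k : ℕ} (h : m < k) : chooseDiff m k = 0 := by
  simp [chooseDiff, Nat.choose_eq_zero_of_lt h, Nat.choose_eq_zero_of_lt (h.trans k.lt_succ_self)]

lemma chooseDiff_succ_succ_sub (m k : ℕ) :
    chooseDiff (m + 1) (k + 1) - chooseDiff m (k + 1) = chooseDiff m k := by
  simp only [chooseDiff, Nat.choose_succ_succ' m, Nat.cast_add]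
  ring

lemma chooseDiff_mul_succ {m k : ℕ} (h : k ≤ m) :
    chooseDiff m k * (m + 1) = (2 * k + 1 - m) * (m + 1).choose (k + 1) := by
  have lower : ((m + 1 : ℕ) : ℝ) * m.choose k = (m + 1).choose (k + 1) * (k + 1 : ℕ) := by
    exact_mod_cast Nat.add_one_mul_choose_eq m k
  have upper : (m.choose (k + 1) : ℝ) * (m + 1 : ℕ) = (m + 1).choose (k + 1) * (m - k : ℕ) := by
    rw [← Nat.add_sub_add_right m 1 k]
    exact_mod_cast Nat.choose_mul_succ_eq m (k + 1)
  push_cast [Nat.cast_sub h] at lower upper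
  rw [chooseDiff]
  linear_combination lower - upper

lemma chooseDiff_two_mul_mul_succ (n : ℕ) : chooseDiff (2 * n) n * (n + 1) = (2 * n).choose n := by
  have h : ((2 * n).choose (n + 1) : ℝ) * (n + 1 : ℕ) = (2 * n).choose n * (2 * n - n : ℕ) := by
    exact_mod_cast Nat.choose_succ_right_eq (2 * n) n
  rw [show 2 * n - n = n by omega] at h
  push_cast at h
  rw [chooseDiff]
  linear_combination -h

lemma catalanConvolution_eq_sub {n k : ℕ} (hn : 1 ≤ n) (hk : k ≤ n) :
    (k : ℝ) / (2 * n - k : ℕ) * (2 * n - k).choose n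
      = chooseDiff (2 * n - k) n - chooseDiff (2 * n - (k + 1)) n := by
  obtain ⟨N, rfl⟩ : ∃ N, n = N + 1 := ⟨n - 1, by omega⟩
  set M := 2 * (N + 1) - (k + 1) with hM
  have hMk : 2 * (N + 1) - k = M + 1 := by omega
  have hkM : (k : ℝ) = 2 * N + 1 - M := by
    rw [hM, Nat.cast_sub (by omega)]
    push_cast
    ring
  rw [hMk, chooseDiff_succ_succ_sub, hkM, div_mul_eq_mul_div, div_eq_iff (by positivity),
    ← chooseDiff_mul_succ (by omega)]
  push_cast
  ring

/-- For every positive integer `n`, `∑_{k=1}^n C_{n,k} = C_n`, where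
`C_{n,k} = (k/(2n-k)) · C(2n-k, n)` is the k-fold Catalan convolution and
`C_n = (1/(n+1)) · C(2n, n)` is the n-th Catalan number. -/
theorem stmt_11 (n : ℕ) (hn : 1 ≤ n) :
    ∑ k ∈ Finset.Icc 1 n, ((k : ℝ) / ((2 * n - k : ℕ) : ℝ)) * (Nat.choose (2 * n - k) n : ℝ)
      = (1 / ((n : ℝ) + 1)) * (Nat.choose (2 * n) n : ℝ) := by
  set G : ℕ → ℝ := fun k => chooseDiff (2 * n - k) n
  have hterm : ∀ k ≤ n, (k : ℝ) / (2 * n - k : ℕ) * (2 * n - k).choose n = G k - G (k + 1) :=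
    fun k hk => catalanConvolution_eq_sub hn hk
  calc _ = ∑ k ∈ Icc 1 n, (G k - G (k + 1)) :=
        sum_congr rfl fun k hk => hterm k (mem_Icc.1 hk).2
    _ = G 1 - G (n + 1) := by
        rw [← neg_sub (G (n + 1)), ← sum_Icc_sub (by omega), ← sum_neg_distrib]
        simp only [neg_sub]
    _ = G 0 := by
        have hG0 : G 0 - G 1 = 0 := by simpa using (hterm 0 (Nat.zero_le n)).symm
        rw [show G (n + 1) = 0 from chooseDiff_eq_zero_of_lt (by omega)]
        linarith
    _ = _ := by
        rw [one_div, eq_inv_mul_iff_mul_eq₀ (by positivity), mul_comm]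
        simpa [G] using chooseDiff_two_mul_mul_succ n
end

section
/- Fix a positive integer k. Then the ratio C_{n,k}/C_n tends to k/2^{k+1} as n → ∞, where C_{n,k} = (k/(2n−k))·C(2n−k, n) and C_n = (1/(n+1))·C(2n, n). In other words, the probability that a uniformly random 123-avoiding permutation of {1,…,n} has its first ascent at positions k, k+1 converges to k/2^{k+1}. -/
/-!
`C_{n,k} / C_n = k (n + 1) / (2n - k) · C(2n - k, n) / C(2n, n)`, and the binomial ratio is
`∏_{j < k} (n - j) / (2n - j)`. The prefactor tends to `k / 2` and each of the `k` factors to `1 / 2`.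
-/

open Filter Finset Topology

theorem tendsto_affine_div_affine (a b c d : ℝ) (hc : c ≠ 0) :
    Tendsto (fun n : ℕ => (a * n + b) / (c * n + d)) atTop (𝓝 (a / c)) := by
  have hnum : Tendsto (fun n : ℕ => a + b / n) atTop (𝓝 a) := by
    simpa using tendsto_const_nhds.add (tendsto_const_div_atTop_nhds_zero_nat b)
  have hden : Tendsto (fun n : ℕ => c + d / n) atTop (𝓝 c) := by
    simpa using tendsto_const_nhds.add (tendsto_const_div_atTop_nhds_zero_nat d)
  refine (hnum.div hden hc).congr' ?_
  filter_upwards [eventually_ne_atTop 0] with n hn0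
  have hn : (n : ℝ) ≠ 0 := Nat.cast_ne_zero.mpr hn0
  change (a + b / n) / (c + d / n) = _
  field_simp

theorem Nat.choose_sub_mul_descFactorial {m n k : ℕ} (h : n + k ≤ m) :
    (m - k).choose n * m.descFactorial k = m.choose n * (m - n).descFactorial k := by
  induction k with
  | zero => simp
  | succ k ih =>
    obtain ⟨N, hN⟩ : ∃ N, m - k = N + 1 := ⟨m - k - 1, by omega⟩
    rw [descFactorial_succ, descFactorial_succ, show m - (k + 1) = N by omega, hN, ← mul_assoc,
      choose_mul_succ_eq, ← hN, mul_right_comm, ih (by omega), Nat.sub_right_comm]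
    ring

theorem Nat.cast_descFactorial_eq_prod_range {R : Type*} [CommRing R] (m k : ℕ) :
    (m.descFactorial k : R) = ∏ j ∈ range k, ((m : R) - j) := by
  rw [← descPochhammer_eval_eq_descFactorial, descPochhammer_eval_eq_prod_range]

theorem Nat.cast_choose_sub_div_cast_choose {K : Type*} [Field K] [CharZero K] {m n k : ℕ}
    (h : n + k ≤ m) :
    ((m - k).choose n : K) / m.choose n = ∏ j ∈ range k, (((m - n : ℕ) : K) - j) / ((m : K) - j) := by
  rw [prod_div_distrib, ← cast_descFactorial_eq_prod_range, ← cast_descFactorial_eq_prod_range,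
    div_eq_div_iff (cast_ne_zero.mpr (choose_pos (show n ≤ m by omega)).ne')
      (cast_ne_zero.mpr (descFactorial_pos.mpr (show k ≤ m by omega)).ne')]
  exact_mod_cast (choose_sub_mul_descFactorial h).trans (mul_comm _ _)

theorem stmt_12_general (k : ℕ) :
    Filter.Tendsto
      (fun n : ℕ =>
        (((k : ℝ) / ((2 * n - k : ℕ) : ℝ)) * (Nat.choose (2 * n - k) n : ℝ))
          / ((1 / ((n : ℝ) + 1)) * (Nat.choose (2 * n) n : ℝ)))
      Filter.atTop (nhds ((k : ℝ) / 2 ^ (k + 1))) := by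
  have hlead : Tendsto (fun n : ℕ => (k : ℝ) * (n + 1) / (2 * n - k)) atTop (𝓝 ((k : ℝ) / 2)) :=
    (tendsto_affine_div_affine k k 2 (-k) two_ne_zero).congr fun n => by ring
  have hprod : Tendsto (fun n : ℕ => ∏ j ∈ range k, ((n : ℝ) - j) / (2 * n - j)) atTop
      (𝓝 (∏ _j ∈ range k, (1 / 2 : ℝ))) :=
    tendsto_finsetProd _ fun j _ =>
      (tendsto_affine_div_affine 1 (-j) 2 (-j) two_ne_zero).congr fun n => by ring
  rw [show (k : ℝ) / 2 ^ (k + 1) = k / 2 * ∏ _j ∈ range k, (1 / 2 : ℝ) by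
    rw [prod_const, card_range, one_div_pow, pow_succ]; ring]
  refine (hlead.mul hprod).congr' ?_
  filter_upwards [eventually_ge_atTop k] with n hn
  have hratio := Nat.cast_choose_sub_div_cast_choose (K := ℝ) (show n + k ≤ 2 * n by omega)
  rw [show 2 * n - n = n by omega] at hratio
  push_cast [Nat.cast_sub (show k ≤ 2 * n by omega)] at hratio ⊢
  rw [← hratio]
  field_simp

/-- Fix a positive integer `k`. Then `C_{n,k} / C_n → k / 2^{k+1}` as `n → ∞`,
where `C_{n,k} = (k/(2n-k)) · C(2n-k, n)` and `C_n = (1/(n+1)) · C(2n, n)`. -/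
theorem stmt_12 (k : ℕ) (hk : 1 ≤ k) :
    Filter.Tendsto
      (fun n : ℕ =>
        (((k : ℝ) / ((2 * n - k : ℕ) : ℝ)) * (Nat.choose (2 * n - k) n : ℝ))
          / ((1 / ((n : ℝ) + 1)) * (Nat.choose (2 * n) n : ℝ)))
      Filter.atTop (nhds ((k : ℝ) / 2 ^ (k + 1))) :=
  stmt_12_general k
end
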